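/- Let γ = (x,y,t) : I → ℝ³ be a smooth horizontal curve (ṫ = 2(yẋ − xẏ)) with ẋ² + ẏ² = 1 on I, and let σ be the horizontal tangent developable of γ, i.e. the straight ruled surface patch with (a,b) = (ẋ, ẏ), so that σ(s,v) = γ(s) + v·γ̇(s). Then the associated function η satisfies η(s,v) = 2v²·(ẋ(s)ÿ(s) − ẏ(s)ẍ(s)) for all (s,v) ∈ I × ℝ. Consequently, a point (s,v) is a characteristic point of σ if and only if v = 0 or the signed curvature ẋÿ − ẏẍ of the projected curve vanishes at s; in particular, if ẋÿ − ẏẍ never vanishes on I, then σ restricted to I × (ℝ∖{0}) has empty characteristic locus. -/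
import Mathlib


/-- The function η associated to a straight ruled surface patch built from
curve data x,y,t and ruling direction (a,b). -/
noncomputable def eta (x y t a b : ℝ → ℝ) (p : ℝ × ℝ) : ℝ :=
  deriv t p.1 + 2 * (x p.1 * deriv y p.1 - y p.1 * deriv x p.1)
    + 4 * p.2 * (a p.1 * deriv y p.1 - b p.1 * deriv x p.1)
    + 2 * p.2 ^ 2 * (a p.1 * deriv b p.1 - b p.1 * deriv a p.1)

/-- for the horizontal tangent developable of a unit-speed horizontal
curve γ = (x,y,t) (the straight ruled surface with (a,b) = (ẋ,ẏ)), the function η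
satisfies η(s,v) = 2v²(ẋÿ − ẏẍ)(s); hence (s,v) is characteristic iff v = 0 or the
signed curvature of the projected curve vanishes at s, and if the signed curvature never
vanishes then the patch has empty characteristic locus on I × (ℝ∖{0}). -/
theorem stmt_16 (I : Set ℝ) (hI : IsOpen I)
    (x y t : ℝ → ℝ)
    (hx : ContDiff ℝ (⊤ : ℕ∞) x) (hy : ContDiff ℝ (⊤ : ℕ∞) y) (ht : ContDiff ℝ (⊤ : ℕ∞) t)
    (hhor : ∀ s ∈ I, deriv t s = 2 * (y s * deriv x s - x s * deriv y s))
    (hunit : ∀ s ∈ I, deriv x s ^ 2 + deriv y s ^ 2 = 1) :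
    (∀ s ∈ I, ∀ v : ℝ,
      eta x y t (deriv x) (deriv y) (s, v)
        = 2 * v ^ 2 * (deriv x s * deriv (deriv y) s - deriv y s * deriv (deriv x) s)) ∧
    (∀ s ∈ I, ∀ v : ℝ,
      (eta x y t (deriv x) (deriv y) (s, v) = 0 ↔
        v = 0 ∨ deriv x s * deriv (deriv y) s - deriv y s * deriv (deriv x) s = 0)) ∧
    ((∀ s ∈ I, deriv x s * deriv (deriv y) s - deriv y s * deriv (deriv x) s ≠ 0) →
      ∀ s ∈ I, ∀ v : ℝ, v ≠ 0 → eta x y t (deriv x) (deriv y) (s, v) ≠ 0) := by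
  have key : ∀ s ∈ I, ∀ v : ℝ,
      eta x y t (deriv x) (deriv y) (s, v)
        = 2 * v ^ 2 * (deriv x s * deriv (deriv y) s - deriv y s * deriv (deriv x) s) := by
    intro s hs v
    simp only [eta, hhor s hs]
    ring
  refine ⟨key, ?_, ?_⟩
  · intro s hs v
    rw [key s hs v]
    constructor
    · intro h
      rcases mul_eq_zero.mp h with h1 | h2
      · rcases mul_eq_zero.mp h1 with h3 | h4
        · norm_num at h3
        · left; exact pow_eq_zero_iff (by norm_num) |>.mp h4
      · right; exact h2
    · rintro (rfl | h)
      · ring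
      · rw [h]; ring
  · intro hne s hs v hv
    rw [key s hs v]
    exact mul_ne_zero (mul_ne_zero two_ne_zero (pow_ne_zero _ hv)) (hne s hs)
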